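/- For all real parameters a, θ₀ and all θ ∈ ℝ, the inner product between spiral points on consecutive loops satisfies ⟪C_{a,θ₀}(θ), C_{a,θ₀}(θ + 2π)⟫ = cos(2aπ). Consequently, if 0 ≤ 2aπ ≤ π, the spherical (geodesic) distance arccos⟪C_{a,θ₀}(θ), C_{a,θ₀}(θ+2π)⟫ between two consecutive loops of the spiral equals 2aπ. -/

import Mathlib

open Real
open scoped RealInnerProductSpace

/-- The spherical spiral with pitch `a` and initial longitude `θ₀`. -/
noncomputable def sphericalSpiral (a θ₀ : ℝ) (θ : ℝ) : EuclideanSpace ℝ (Fin 3) :=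
  (WithLp.equiv 2 (Fin 3 → ℝ)).symm
    ![cos (θ + θ₀) * cos (a * θ), sin (θ + θ₀) * cos (a * θ), sin (a * θ)]

theorem inner_sphericalSpiral (a θ₀ θ φ : ℝ) :
    ⟪sphericalSpiral a θ₀ θ, sphericalSpiral a θ₀ φ⟫ =
      cos (φ - θ) * cos (a * θ) * cos (a * φ) + sin (a * θ) * sin (a * φ) := by
  simp only [sphericalSpiral, PiLp.inner_apply, RCLike.inner_apply, conj_trivial,
    Fin.sum_univ_three, WithLp.equiv_symm_apply, Matrix.cons_val_zero,
    Matrix.cons_val_one, Matrix.head_cons, Matrix.cons_val_two, Matrix.tail_cons]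
  have hlong : φ - θ = (φ + θ₀) - (θ + θ₀) := by ring
  rw [hlong, cos_sub]
  ring

theorem inner_sphericalSpiral_add_two_pi (a θ₀ θ : ℝ) :
    ⟪sphericalSpiral a θ₀ θ, sphericalSpiral a θ₀ (θ + 2 * π)⟫ = cos (2 * a * π) := by
  have hlat : 2 * a * π = a * (θ + 2 * π) - a * θ := by ring
  rw [inner_sphericalSpiral, add_sub_cancel_left, cos_two_pi, one_mul, hlat, cos_sub]
  ring

/-- The inner product between points of the spherical spiral on consecutive loops
(`Δθ = 2π`) is `cos (2aπ)`; hence if `0 ≤ 2aπ ≤ π`, the geodesic distance between two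
consecutive loops is exactly `2aπ`. -/
theorem sphericalSpiral_consecutive_loops (a θ₀ θ : ℝ) :
    ⟪sphericalSpiral a θ₀ θ, sphericalSpiral a θ₀ (θ + 2 * π)⟫ = cos (2 * a * π) ∧
      (0 ≤ 2 * a * π → 2 * a * π ≤ π →
        arccos ⟪sphericalSpiral a θ₀ θ, sphericalSpiral a θ₀ (θ + 2 * π)⟫ = 2 * a * π) := by
  refine ⟨inner_sphericalSpiral_add_two_pi a θ₀ θ, fun h₀ hπ => ?_⟩
  rw [inner_sphericalSpiral_add_two_pi, arccos_cos h₀ hπ]
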